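/- arXiv:2310.13470 — 2 statements merged into one kernel-verified Lean document; each statement's English description precedes it below -/
import Mathlib

section
/- Let (Ω, 𝔉, μ) be a probability space and C ≥ 0 a real constant. Let f and (f_k)_{k∈ℕ} be real-valued measurable functions on Ω such that f_k → f in L²(μ) and f_k → f μ-almost everywhere, and let (E_k)_{k∈ℕ} be real numbers converging to E ∈ ℝ. Suppose that for every k the function f_k² log f_k² is μ-integrable and Ent_μ(f_k²) ≤ C·E_k. Then ∫ f² log f² dμ (which is well defined with values in (−∞, +∞] because u log u ≥ −1/e) is finite and Ent_μ(f²) ≤ C·E. -/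
open MeasureTheory Filter

/-- The entropy `Ent_μ(g) = ∫ g log g dμ − (∫ g dμ)·log(∫ g dμ)` (with the convention
`0 · log 0 = 0`, which holds automatically since `Real.log 0 = 0`). -/
noncomputable def ent {Ω : Type*} [MeasurableSpace Ω] (μ : Measure Ω) (g : Ω → ℝ) : ℝ :=
  (∫ x, g x * Real.log (g x) ∂μ) - (∫ x, g x ∂μ) * Real.log (∫ x, g x ∂μ)

open Topology

/-!
The lower bound `u log u ≥ u - 1 ≥ -1` makes `f_k² log f_k² + 1` a nonnegative sequence converging
a.e. to `f² log f² + 1`, so Fatou's lemma bounds `∫ f² log f²` by the limit of the bounds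
`C E_k + (∫ f_k²) log (∫ f_k²)` on `∫ f_k² log f_k²`. That limit is `C E + (∫ f²) log (∫ f²)`,
because `L²` convergence gives `∫ f_k² → ∫ f²` and `u ↦ u log u` is continuous.
-/

namespace MeasureTheory

variable {α : Type*} [MeasurableSpace α] {μ : Measure α}

theorem integral_sq_eq_inner_toLp {f : α → ℝ} (hf : MemLp f 2 μ) :
    ∫ x, f x ^ 2 ∂μ = inner ℝ (hf.toLp f) (hf.toLp f) := by
  rw [L2.inner_def]
  refine integral_congr_ae ?_
  filter_upwards [hf.coeFn_toLp] with x hx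
  simp [hx, sq]

theorem tendsto_integral_sq_of_tendsto_eLpNorm {f : α → ℝ} {fk : ℕ → α → ℝ}
    (hf : MemLp f 2 μ) (hfk : ∀ k, MemLp (fk k) 2 μ)
    (hlim : Tendsto (fun k => eLpNorm (fk k - f) 2 μ) atTop (𝓝 0)) :
    Tendsto (fun k => ∫ x, fk k x ^ 2 ∂μ) atTop (𝓝 (∫ x, f x ^ 2 ∂μ)) := by
  have hLp := (Lp.tendsto_Lp_iff_tendsto_eLpNorm'' fk hfk f hf).2 hlim
  have h := hLp.inner (𝕜 := ℝ) hLp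
  simp only [← integral_sq_eq_inner_toLp] at h
  exact h

theorem lintegral_ofReal_le_of_tendsto_ae {g : α → ℝ} {gk : ℕ → α → ℝ} {b : ℕ → ℝ} {B : ℝ}
    (hgk : ∀ k, Integrable (gk k) μ) (hgk_nonneg : ∀ k, 0 ≤ᵐ[μ] gk k)
    (hlim : ∀ᵐ x ∂μ, Tendsto (fun k => gk k x) atTop (𝓝 (g x)))
    (hb : ∀ k, ∫ x, gk k x ∂μ ≤ b k) (hB : Tendsto b atTop (𝓝 B)) :
    ∫⁻ x, ENNReal.ofReal (g x) ∂μ ≤ ENNReal.ofReal B :=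
  calc ∫⁻ x, ENNReal.ofReal (g x) ∂μ
      = ∫⁻ x, liminf (fun k => ENNReal.ofReal (gk k x)) atTop ∂μ := by
        refine lintegral_congr_ae ?_
        filter_upwards [hlim] with x hx
        exact ((ENNReal.continuous_ofReal.tendsto _).comp hx).liminf_eq.symm
    _ ≤ liminf (fun k => ∫⁻ x, ENNReal.ofReal (gk k x) ∂μ) atTop :=
        lintegral_liminf_le' fun k => (hgk k).aemeasurable.ennreal_ofReal
    _ ≤ liminf (fun k => ENNReal.ofReal (b k)) atTop := by
        refine liminf_le_liminf (Eventually.of_forall fun k => ?_)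
        rw [← ofReal_integral_eq_lintegral_ofReal (hgk k) (hgk_nonneg k)]
        exact ENNReal.ofReal_le_ofReal (hb k)
    _ = ENNReal.ofReal B := ((ENNReal.continuous_ofReal.tendsto B).comp hB).liminf_eq

theorem integrable_and_integral_le_of_tendsto_ae_of_nonneg {g : α → ℝ} {gk : ℕ → α → ℝ}
    {b : ℕ → ℝ} {B : ℝ}
    (hgk : ∀ k, Integrable (gk k) μ) (hgk_nonneg : ∀ k, 0 ≤ᵐ[μ] gk k)
    (hlim : ∀ᵐ x ∂μ, Tendsto (fun k => gk k x) atTop (𝓝 (g x)))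
    (hb : ∀ k, ∫ x, gk k x ∂μ ≤ b k) (hB : Tendsto b atTop (𝓝 B)) :
    Integrable g μ ∧ ∫ x, g x ∂μ ≤ B := by
  have hlint := lintegral_ofReal_le_of_tendsto_ae hgk hgk_nonneg hlim hb hB
  have hg_nonneg : 0 ≤ᵐ[μ] g := by
    filter_upwards [hlim, ae_all_iff.2 hgk_nonneg] with x hx hx_nonneg
    exact ge_of_tendsto' hx hx_nonneg
  have hB_nonneg : 0 ≤ B :=
    ge_of_tendsto' hB fun k => (integral_nonneg_of_ae (hgk_nonneg k)).trans (hb k)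
  have hg : Integrable g μ := by
    refine ⟨aestronglyMeasurable_of_tendsto_ae _ (fun k => (hgk k).1) hlim, ?_⟩
    rw [hasFiniteIntegral_iff_ofReal hg_nonneg]
    exact hlint.trans_lt ENNReal.ofReal_lt_top
  refine ⟨hg, ?_⟩
  rw [← ENNReal.ofReal_le_ofReal_iff hB_nonneg, ofReal_integral_eq_lintegral_ofReal hg hg_nonneg]
  exact hlint

theorem integrable_and_integral_le_of_tendsto_ae_of_le [IsFiniteMeasure μ] {g : α → ℝ}
    {gk : ℕ → α → ℝ} {b : ℕ → ℝ} {B c : ℝ}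
    (hgk : ∀ k, Integrable (gk k) μ) (hgk_ge : ∀ k, ∀ᵐ x ∂μ, c ≤ gk k x)
    (hlim : ∀ᵐ x ∂μ, Tendsto (fun k => gk k x) atTop (𝓝 (g x)))
    (hb : ∀ k, ∫ x, gk k x ∂μ ≤ b k) (hB : Tendsto b atTop (𝓝 B)) :
    Integrable g μ ∧ ∫ x, g x ∂μ ≤ B := by
  have hshift := integrable_and_integral_le_of_tendsto_ae_of_nonneg
    (g := fun x => g x - c) (gk := fun k x => gk k x - c)
    (b := fun k => b k - μ.real Set.univ * c) (B := B - μ.real Set.univ * c)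
    (fun k => (hgk k).sub (integrable_const c))
    (fun k => by filter_upwards [hgk_ge k] with x hx using sub_nonneg.2 hx)
    (by filter_upwards [hlim] with x hx using hx.sub_const c)
    (fun k => by simpa [integral_sub (hgk k) (integrable_const c)] using hb k)
    (hB.sub_const _)
  have hg : Integrable g μ := by simpa [sub_eq_add_neg, integrable_add_const_iff] using hshift.1
  refine ⟨hg, ?_⟩
  simpa [integral_sub hg (integrable_const c)] using hshift.2

end MeasureTheory

theorem stmt3_general {Ω : Type*} [MeasurableSpace Ω] (μ : Measure Ω) [IsProbabilityMeasure μ]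
    (C : ℝ)
    (f : Ω → ℝ) (fk : ℕ → Ω → ℝ)
    (hfL2 : MemLp f 2 μ) (hfkL2 : ∀ k, MemLp (fk k) 2 μ)
    (hL2 : Tendsto (fun k => eLpNorm (fk k - f) 2 μ) atTop (nhds 0))
    (hae : ∀ᵐ x ∂μ, Tendsto (fun k => fk k x) atTop (nhds (f x)))
    (Ek : ℕ → ℝ) (E : ℝ) (hE : Tendsto Ek atTop (nhds E))
    (hint : ∀ k, Integrable (fun x => (fk k x) ^ 2 * Real.log ((fk k x) ^ 2)) μ)
    (hent : ∀ k, ent μ (fun x => (fk k x) ^ 2) ≤ C * Ek k) :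
    Integrable (fun x => (f x) ^ 2 * Real.log ((f x) ^ 2)) μ ∧
      ent μ (fun x => (f x) ^ 2) ≤ C * E := by
  simp only [ent] at hent ⊢
  have hsq := tendsto_integral_sq_of_tendsto_eLpNorm hfL2 hfkL2 hL2
  have hbound : Tendsto (fun k => C * Ek k + (∫ x, fk k x ^ 2 ∂μ) * Real.log (∫ x, fk k x ^ 2 ∂μ))
      atTop (𝓝 (C * E + (∫ x, f x ^ 2 ∂μ) * Real.log (∫ x, f x ^ 2 ∂μ))) :=
    (hE.const_mul C).add ((Real.continuous_mul_log.tendsto _).comp hsq)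
  have hcont : Continuous fun u : ℝ => u ^ 2 * Real.log (u ^ 2) :=
    Real.continuous_mul_log.comp (continuous_pow 2)
  obtain ⟨hf_int, hf_le⟩ := integrable_and_integral_le_of_tendsto_ae_of_le (c := -1) hint
    (fun k => ae_of_all _ fun x => by
      linarith [Real.self_sub_one_le_mul_log (sq_nonneg (fk k x)), sq_nonneg (fk k x)])
    (by filter_upwards [hae] with x hx using (hcont.tendsto (f x)).comp hx)
    (fun k => by linarith [hent k]) hbound
  exact ⟨hf_int, by linarith⟩

/-- Let `(Ω, 𝔉, μ)` be a probability space and `C ≥ 0`.  Let `f` and `(f_k)` be measurable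
real functions with `f_k → f` in `L²(μ)` and `μ`-a.e., and let `E_k → E` in `ℝ`.  If for
every `k` the function `f_k² log f_k²` is integrable and `Ent_μ(f_k²) ≤ C·E_k`, then
`∫ f² log f² dμ` is finite (i.e. `f² log f²` is integrable) and `Ent_μ(f²) ≤ C·E`. -/
theorem stmt3 {Ω : Type*} [MeasurableSpace Ω] (μ : Measure Ω) [IsProbabilityMeasure μ]
    (C : ℝ) (hC : 0 ≤ C)
    (f : Ω → ℝ) (fk : ℕ → Ω → ℝ)
    (hf : Measurable f) (hfk : ∀ k, Measurable (fk k))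
    (hfL2 : MemLp f 2 μ) (hfkL2 : ∀ k, MemLp (fk k) 2 μ)
    (hL2 : Tendsto (fun k => eLpNorm (fk k - f) 2 μ) atTop (nhds 0))
    (hae : ∀ᵐ x ∂μ, Tendsto (fun k => fk k x) atTop (nhds (f x)))
    (Ek : ℕ → ℝ) (E : ℝ) (hE : Tendsto Ek atTop (nhds E))
    (hint : ∀ k, Integrable (fun x => (fk k x) ^ 2 * Real.log ((fk k x) ^ 2)) μ)
    (hent : ∀ k, ent μ (fun x => (fk k x) ^ 2) ≤ C * Ek k) :
    Integrable (fun x => (f x) ^ 2 * Real.log ((f x) ^ 2)) μ ∧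
      ent μ (fun x => (f x) ^ 2) ≤ C * E :=
  stmt3_general μ C f fk hfL2 hfkL2 hL2 hae Ek E hE hint hent
end

section
/- Let (G, 𝒢, μ) and (M, ℳ, ν) be measure spaces, π : G → M a measurable map with ν = π_*μ, and let ι : L²(ν) → L²(μ) be the linear isometry ι(f) = f∘π. Let (P_t)_{t≥0} and (Q_t)_{t≥0} be families of continuous linear operators on L²(μ) and L²(ν) respectively, satisfying the intertwining relation ι(Q_t f) = P_t(ι f) for all t ≥ 0 and f ∈ L²(ν). Suppose that (P_t)_{t≥0} is: (i) a semigroup (P_0 = Id and P_{t+s} = P_t ∘ P_s for all s,t ≥ 0); (ii) symmetric (⟨P_t g, h⟩_{L²(μ)} = ⟨g, P_t h⟩_{L²(μ)} for all g,h); (iii) a contraction (‖P_t g‖_{L²(μ)} ≤ ‖g‖_{L²(μ)}); (iv) positivity preserving (g ≥ 0 μ-a.e. implies P_t g ≥ 0 μ-a.e.); (v) sub-Markovian (0 ≤ g ≤ 1 μ-a.e. implies 0 ≤ P_t g ≤ 1 μ-a.e.); and (vi) strongly continuous (‖P_t g − g‖_{L²(μ)} → 0 as t → 0⁺ for every g).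 Then (Q_t)_{t≥0} has all of the same properties (i)–(vi) on L²(ν). -/
open MeasureTheory Filter
open scoped NNReal RealInnerProductSpace

/-- Let `π : (G,μ) → (M,ν)` be measure preserving (`ν = π₊μ`) and
`ι : L²(ν) → L²(μ)` the linear isometry `ι f = f∘π`.  Let `(P_t)` on `L²(μ)` and `(Q_t)`
on `L²(ν)` satisfy the intertwining relation `ι (Q_t f) = P_t (ι f)`.  If `(P_t)` is a
symmetric, contractive, positivity-preserving, sub-Markovian, strongly continuous
semigroup, then so is `(Q_t)`. -/
theorem stmt7 {G M : Type*} [MeasurableSpace G] [MeasurableSpace M]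
    (μ : Measure G) (ν : Measure M) (π : G → M) (hπ : MeasurePreserving π μ ν)
    (ι : Lp ℝ 2 ν →ₗᵢ[ℝ] Lp ℝ 2 μ)
    (hι : ∀ f : Lp ℝ 2 ν, (ι f : G → ℝ) =ᵐ[μ] fun x => f (π x))
    (P : ℝ≥0 → Lp ℝ 2 μ →L[ℝ] Lp ℝ 2 μ)
    (Q : ℝ≥0 → Lp ℝ 2 ν →L[ℝ] Lp ℝ 2 ν)
    (hPQ : ∀ (t : ℝ≥0) (f : Lp ℝ 2 ν), ι (Q t f) = P t (ι f))
    -- (i) semigroup property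
    (hP0 : P 0 = ContinuousLinearMap.id ℝ (Lp ℝ 2 μ))
    (hPsemi : ∀ s t : ℝ≥0, P (t + s) = (P t).comp (P s))
    -- (ii) symmetry
    (hPsymm : ∀ (t : ℝ≥0) (g h : Lp ℝ 2 μ), ⟪P t g, h⟫ = ⟪g, P t h⟫)
    -- (iii) contraction
    (hPcontr : ∀ (t : ℝ≥0) (g : Lp ℝ 2 μ), ‖P t g‖ ≤ ‖g‖)
    -- (iv) positivity preserving
    (hPpos : ∀ (t : ℝ≥0) (g : Lp ℝ 2 μ), (∀ᵐ x ∂μ, 0 ≤ g x) → ∀ᵐ x ∂μ, 0 ≤ (P t g) x)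
    -- (v) sub-Markovian
    (hPmarkov : ∀ (t : ℝ≥0) (g : Lp ℝ 2 μ), (∀ᵐ x ∂μ, 0 ≤ g x ∧ g x ≤ 1) →
      ∀ᵐ x ∂μ, 0 ≤ (P t g) x ∧ (P t g) x ≤ 1)
    -- (vi) strong continuity at `t = 0⁺`
    (hPcont : ∀ g : Lp ℝ 2 μ,
      Tendsto (fun t : ℝ≥0 => P t g) (nhdsWithin 0 (Set.Ioi 0)) (nhds g)) :
    -- then `(Q_t)` has the same properties (i)–(vi)
    (Q 0 = ContinuousLinearMap.id ℝ (Lp ℝ 2 ν)) ∧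
    (∀ s t : ℝ≥0, Q (t + s) = (Q t).comp (Q s)) ∧
    (∀ (t : ℝ≥0) (g h : Lp ℝ 2 ν), ⟪Q t g, h⟫ = ⟪g, Q t h⟫) ∧
    (∀ (t : ℝ≥0) (g : Lp ℝ 2 ν), ‖Q t g‖ ≤ ‖g‖) ∧
    (∀ (t : ℝ≥0) (g : Lp ℝ 2 ν), (∀ᵐ x ∂ν, 0 ≤ g x) → ∀ᵐ x ∂ν, 0 ≤ (Q t g) x) ∧
    (∀ (t : ℝ≥0) (g : Lp ℝ 2 ν), (∀ᵐ x ∂ν, 0 ≤ g x ∧ g x ≤ 1) →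
      ∀ᵐ x ∂ν, 0 ≤ (Q t g) x ∧ (Q t g) x ≤ 1) ∧
    (∀ g : Lp ℝ 2 ν,
      Tendsto (fun t : ℝ≥0 => Q t g) (nhdsWithin 0 (Set.Ioi 0)) (nhds g)) := by
  have hinj : Function.Injective ι := ι.injective
  -- transfer of a.e. pointwise predicates along π
  have key : ∀ (f : Lp ℝ 2 ν) (p : ℝ → Prop), MeasurableSet {a | p a} →
      ((∀ᵐ y ∂ν, p (f y)) ↔ ∀ᵐ x ∂μ, p ((ι f) x)) := by
    intro f p hp
    have hmeas := (Lp.aestronglyMeasurable f)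
    have hfg : (f : M → ℝ) =ᵐ[ν] hmeas.mk f := hmeas.ae_eq_mk
    have hgm : Measurable (hmeas.mk f) := hmeas.stronglyMeasurable_mk.measurable
    have hιf := hι f
    have hπae : AEMeasurable π μ := hπ.measurable.aemeasurable
    constructor
    · intro h
      have h' : ∀ᵐ y ∂(μ.map π), p (f y) := by rwa [hπ.map_eq]
      have := ae_of_ae_map hπae h'
      filter_upwards [hιf, this] with x hx1 hx2
      rw [hx1]; exact hx2
    · intro h
      have h1 : ∀ᵐ x ∂μ, p (f (π x)) := by
        filter_upwards [hιf, h] with x hx1 hx2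
        rw [← hx1]; exact hx2
      have hfg' : ∀ᵐ y ∂(μ.map π), (f : M → ℝ) y = hmeas.mk f y := by
        rwa [hπ.map_eq]
      have h2 : ∀ᵐ x ∂μ, (f : M → ℝ) (π x) = hmeas.mk f (π x) :=
        ae_of_ae_map hπae hfg'
      have h3 : ∀ᵐ x ∂μ, p (hmeas.mk f (π x)) := by
        filter_upwards [h1, h2] with x hx1 hx2
        rw [← hx2]; exact hx1
      have h4 : ∀ᵐ y ∂(μ.map π), p (hmeas.mk f y) :=
        (ae_map_iff hπae (hgm hp)).2 h3
      have h5 : ∀ᵐ y ∂ν, p (hmeas.mk f y) := by rwa [hπ.map_eq] at h4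
      filter_upwards [hfg, h5] with y hy1 hy2
      rw [hy1]; exact hy2
  refine ⟨?_, ?_, ?_, ?_, ?_, ?_, ?_⟩
  · -- Q 0 = id
    refine ContinuousLinearMap.ext fun f => hinj ?_
    rw [hPQ, hP0]; rfl
  · -- semigroup
    intro s t
    refine ContinuousLinearMap.ext fun f => hinj ?_
    rw [ContinuousLinearMap.comp_apply, hPQ, hPQ, hPQ, hPsemi s t,
      ContinuousLinearMap.comp_apply]
  · -- symmetry
    intro t g h
    have h1 : ⟪Q t g, h⟫ = ⟪ι (Q t g), ι h⟫ := (ι.inner_map_map _ _).symm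
    have h2 : ⟪g, Q t h⟫ = ⟪ι g, ι (Q t h)⟫ := (ι.inner_map_map _ _).symm
    rw [h1, h2, hPQ, hPQ, hPsymm]
  · -- contraction
    intro t g
    calc ‖Q t g‖ = ‖ι (Q t g)‖ := (ι.norm_map _).symm
      _ = ‖P t (ι g)‖ := by rw [hPQ]
      _ ≤ ‖ι g‖ := hPcontr t _
      _ = ‖g‖ := ι.norm_map _
  · -- positivity
    intro t g hg
    have hset : MeasurableSet {a : ℝ | 0 ≤ a} := measurableSet_Ici
    have h1 : ∀ᵐ x ∂μ, 0 ≤ (ι g) x := (key g _ hset).1 hg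
    have h2 := hPpos t (ι g) h1
    rw [← hPQ] at h2
    exact (key (Q t g) _ hset).2 h2
  · -- sub-Markovian
    intro t g hg
    have hset : MeasurableSet {a : ℝ | 0 ≤ a ∧ a ≤ 1} := by
      have : {a : ℝ | 0 ≤ a ∧ a ≤ 1} = Set.Icc 0 1 := rfl
      rw [this]; exact measurableSet_Icc
    have h1 : ∀ᵐ x ∂μ, 0 ≤ (ι g) x ∧ (ι g) x ≤ 1 :=
      (key g (fun a => 0 ≤ a ∧ a ≤ 1) hset).1 hg
    have h2 := hPmarkov t (ι g) h1
    rw [← hPQ] at h2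
    exact (key (Q t g) (fun a => 0 ≤ a ∧ a ≤ 1) hset).2 h2
  · -- strong continuity
    intro g
    rw [tendsto_iff_dist_tendsto_zero]
    have hd : (fun t : ℝ≥0 => dist (Q t g) g) = fun t : ℝ≥0 => dist (P t (ι g)) (ι g) := by
      funext t
      rw [← ι.dist_map, hPQ]
    rw [hd]
    exact tendsto_iff_dist_tendsto_zero.1 (hPcont (ι g))
end
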